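/- arXiv:1809.05281 — 3 statements merged into one kernel-verified Lean document; each statement's English description precedes it below -/
import Mathlib

section
/- Let n ≥ 3, γ > 0, A > 0, and let ŵ₂ be the positive solution of γ η ŵ₂' + (1+2γ) ŵ₂ = f₂ constructed as ŵ₂(η) = -(1/(γ η^{2+1/γ})) ∫_η^∞ f₂(x) x^{1+1/γ} dx, where f₂(η) = -(n-1)(1/γ²)·η^{-2/γ-2}/(A^{-1/γ} - η^{-1/γ})². Then lim_{η → A⁺} (η - A) ŵ₂(η) = (n-1)/(γ A). -/
/-!
With `s = 1/γ` and `u x = A^(-s) - x^(-s)`, the integrand `f₂ x * x^(1+s)` equals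
`-((n-1)/γ) * u' x / (u x)^2`, so the integral has the closed form
`-((n-1)/γ) * (1 / u η - A^s)`. Since `u` has a simple zero at `A` with `u' A = s A^(-s-1)`,
`(η - A) / u η → A^(s+1) / s`, and the limit follows.
-/

open Real MeasureTheory Filter Topology Set

theorem HasDerivAt.tendsto_sub_div_sub {f : ℝ → ℝ} {a d : ℝ} (hf : HasDerivAt f d a)
    (hd : d ≠ 0) : Tendsto (fun x => (x - a) / (f x - f a)) (𝓝[≠] a) (𝓝 d⁻¹) :=
  ((hasDerivAt_iff_tendsto_slope.mp hf).inv₀ hd).congr fun x => by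
    rw [slope_def_field, inv_div]

section
variable {A s : ℝ}

lemma rpow_neg_sub_rpow_neg_pos (hA : 0 < A) (hs : 0 < s) {x : ℝ} (hx : A < x) :
    0 < A ^ (-s) - x ^ (-s) :=
  sub_pos.mpr (rpow_lt_rpow_of_neg hA hx (neg_neg_iff_pos.mpr hs))

lemma hasDerivAt_inv_rpow_neg_sub (hA : 0 < A) (hs : 0 < s) {x : ℝ} (hx : A < x) :
    HasDerivAt (fun y => -(A ^ (-s) - y ^ (-s))⁻¹)
      (s * x ^ (-s - 1) / (A ^ (-s) - x ^ (-s)) ^ 2) x := by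
  have hu := ((hasDerivAt_rpow_const (p := -s) (Or.inl (hA.trans hx).ne')).const_sub
    (A ^ (-s))).inv (rpow_neg_sub_rpow_neg_pos hA hs hx).ne'
  exact hu.neg.congr_deriv (by ring)

lemma integral_Ioi_rpow_div_sq (hA : 0 < A) (hs : 0 < s) {η : ℝ} (hη : A < η) :
    ∫ x in Ioi η, s * x ^ (-s - 1) / (A ^ (-s) - x ^ (-s)) ^ 2 =
      (A ^ (-s) - η ^ (-s))⁻¹ - A ^ s := by
  have hlim : Tendsto (fun y : ℝ => -(A ^ (-s) - y ^ (-s))⁻¹) atTop (𝓝 (-A ^ s)) := by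
    have h := ((tendsto_rpow_neg_atTop hs).const_sub (A ^ (-s))).inv₀
      (by rw [sub_zero]; exact (rpow_pos_of_pos hA (-s)).ne')
    rw [sub_zero, ← rpow_neg hA.le, neg_neg] at h
    exact h.neg
  rw [integral_Ioi_of_hasDerivAt_of_nonneg
    (hasDerivAt_inv_rpow_neg_sub hA hs hη).continuousAt.continuousWithinAt
    (fun x hx => hasDerivAt_inv_rpow_neg_sub hA hs (hη.trans hx))
    (fun x hx => by have : 0 < x := hA.trans (hη.trans hx); positivity) hlim]
  ring

lemma tendsto_sub_div_rpow_neg_sub (hA : 0 < A) (hs : 0 < s) :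
    Tendsto (fun η => (η - A) / (A ^ (-s) - η ^ (-s))) (𝓝[>] A) (𝓝 (A ^ (s + 1) / s)) := by
  have h := ((hasDerivAt_rpow_const (p := -s) (Or.inl hA.ne')).tendsto_sub_div_sub
    (mul_ne_zero (neg_ne_zero.mpr hs.ne') (rpow_pos_of_pos hA _).ne')).neg
  have hval : -(-s * A ^ (-s - 1))⁻¹ = A ^ (s + 1) / s := by
    rw [show -s - 1 = -(s + 1) by ring, rpow_neg hA.le]
    field_simp
  rw [hval] at h
  refine (h.mono_left (nhdsWithin_mono A fun x hx => ne_of_gt hx)).congr fun η => ?_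
  rw [← neg_sub (η ^ (-s)), div_neg]

end

lemma integral_Ioi_forcing_mul_rpow {m γ A η : ℝ} (hγ : 0 < γ) (hA : 0 < A) (hη : A < η) :
    ∫ x in Ioi η, -m * (1 / γ ^ 2) * x ^ (-(2/γ) - 2) / (A ^ (-(1/γ)) - x ^ (-(1/γ))) ^ 2 *
        x ^ (1 + 1/γ) =
      -(m / γ) * ((A ^ (-(1/γ)) - η ^ (-(1/γ)))⁻¹ - A ^ (1/γ)) := by
  have hintegrand : EqOn
      (fun x => -m * (1 / γ ^ 2) * x ^ (-(2/γ) - 2) / (A ^ (-(1/γ)) - x ^ (-(1/γ))) ^ 2 *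
        x ^ (1 + 1/γ))
      (fun x => -(m / γ) * (1 / γ * x ^ (-(1/γ) - 1) / (A ^ (-(1/γ)) - x ^ (-(1/γ))) ^ 2))
      (Ioi η) := fun x hx => by
    have hx : 0 < x := hA.trans (hη.trans hx)
    have hpow : x ^ (-(2/γ) - 2) * x ^ (1 + 1/γ) = x ^ (-(1/γ) - 1) := by
      rw [← rpow_add hx]; ring_nf
    simp only [← hpow]
    ring
  rw [setIntegral_congr_fun measurableSet_Ioi hintegrand, integral_const_mul,
    integral_Ioi_rpow_div_sq hA (by positivity) hη]

theorem stmt7_general (n : ℕ) (γ A : ℝ) (hγ : 0 < γ) (hA : 0 < A)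
    (f₂ w₂ : ℝ → ℝ)
    (hf2 : ∀ η : ℝ, f₂ η = -((n : ℝ) - 1) * (1 / γ ^ 2) * η ^ (-(2/γ) - 2) /
        (A ^ (-(1/γ)) - η ^ (-(1/γ))) ^ 2)
    (hw2 : ∀ η : ℝ, w₂ η = -(1 / (γ * η ^ (2 + 1/γ))) *
        ∫ x in Set.Ioi η, f₂ x * x ^ (1 + 1/γ)) :
    Tendsto (fun η => (η - A) * w₂ η) (nhdsWithin A (Set.Ioi A))
      (nhds (((n : ℝ) - 1) / (γ * A))) := by
  have hs : 0 < 1 / γ := by positivity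
  have hclosed : ∀ η, A < η → (η - A) * w₂ η = 1 / (γ * η ^ (2 + 1/γ)) * (((n : ℝ) - 1) / γ) *
      ((η - A) / (A ^ (-(1/γ)) - η ^ (-(1/γ))) - A ^ (1/γ) * (η - A)) := fun η hη => by
    simp only [hw2, hf2, integral_Ioi_forcing_mul_rpow hγ hA hη]
    ring
  have hprefactor : ContinuousAt (fun η : ℝ => 1 / (γ * η ^ (2 + 1/γ))) A :=
    continuousAt_const.div (continuousAt_const.mul (continuousAt_rpow_const _ _ (Or.inl hA.ne')))
      (by positivity)
  have hlim := ((hprefactor.tendsto.mono_left nhdsWithin_le_nhds).mul_const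
    (((n : ℝ) - 1) / γ)).mul ((tendsto_sub_div_rpow_neg_sub hA hs).sub
      (((tendsto_id.sub_const A).mono_left nhdsWithin_le_nhds).const_mul (A ^ (1/γ))))
  have hvalue : 1 / (γ * A ^ (2 + 1/γ)) * (((n : ℝ) - 1) / γ) *
      (A ^ (1/γ + 1) / (1/γ) - A ^ (1/γ) * (A - A)) = ((n : ℝ) - 1) / (γ * A) := by
    rw [sub_self, mul_zero, sub_zero, show (2 : ℝ) + 1/γ = 1 + (1/γ + 1) by ring,
      rpow_add hA, rpow_one]
    field_simp
  rw [hvalue] at hlim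
  exact hlim.congr' (eventually_nhdsWithin_of_forall fun η hη => (hclosed η hη).symm)

theorem stmt7 (n : ℕ) (hn : 3 ≤ n) (γ A : ℝ) (hγ : 0 < γ) (hA : 0 < A)
    (f₂ w₂ : ℝ → ℝ)
    (hf2 : ∀ η : ℝ, f₂ η = -((n : ℝ) - 1) * (1 / γ ^ 2) * η ^ (-(2/γ) - 2) /
        (A ^ (-(1/γ)) - η ^ (-(1/γ))) ^ 2)
    (hw2 : ∀ η : ℝ, w₂ η = -(1 / (γ * η ^ (2 + 1/γ))) *
        ∫ x in Set.Ioi η, f₂ x * x ^ (1 + 1/γ)) :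
    Tendsto (fun η => (η - A) * w₂ η) (nhdsWithin A (Set.Ioi A))
      (nhds (((n : ℝ) - 1) / (γ * A))) :=
  stmt7_general n γ A hγ hA f₂ w₂ hf2 hw2
end

section
/- Let n ≥ 3 and let λ₁, …, λₙ ≥ 0 be nonnegative reals with μ_i = Σ_{k,l ≠ i, k > l}(λ_k - λ_l)² + (n-2) Σ_{k ≠ i}(λ_k - λ_i)λ_i. Suppose m indices satisfy λ_i = 0 with 2 ≤ m ≤ n-1, and suppose μ_i = 0 for every index i with λ_i = 0. Then all λ_j are zero. -/
open scoped Classical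

theorem stmt12 (n : ℕ) (hn : 3 ≤ n) (m : ℕ) (hm2 : 2 ≤ m) (hmn : m ≤ n - 1)
    (lam μ : Fin n → ℝ)
    (hμ : ∀ i : Fin n, μ i =
        (∑ k : Fin n, ∑ l : Fin n,
          if k ≠ i ∧ l ≠ i ∧ l < k then (lam k - lam l) ^ 2 else 0) +
        ((n : ℝ) - 2) * ∑ k : Fin n, (if k ≠ i then (lam k - lam i) * lam i else 0))
    (hnn : ∀ i, 0 ≤ lam i)
    (hcard : (Finset.univ.filter fun i => lam i = 0).card = m)
    (hμ0 : ∀ i, lam i = 0 → μ i = 0) :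
    ∀ j, lam j = 0 := by
  have hlt : 1 < (Finset.univ.filter fun i => lam i = 0).card := by omega
  rw [Finset.one_lt_card] at hlt
  obtain ⟨i, hi, j, hj, hij⟩ := hlt
  simp only [Finset.mem_filter] at hi hj
  have hli : lam i = 0 := hi.2
  have hlj : lam j = 0 := hj.2
  have h0 := hμ0 i hli
  rw [hμ i] at h0
  have h2 : ((n:ℝ)-2) * ∑ k : Fin n, (if k ≠ i then (lam k - lam i) * lam i else 0) = 0 := by
    simp [hli]
  rw [h2, add_zero] at h0
  have hinner : ∀ k l : Fin n,
      0 ≤ (if k ≠ i ∧ l ≠ i ∧ l < k then (lam k - lam l) ^ 2 else 0) := by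
    intro k l
    split <;> positivity
  have houter := (Finset.sum_eq_zero_iff_of_nonneg (by
    intro k _
    exact Finset.sum_nonneg fun l _ => hinner k l)).mp h0
  have hterm : ∀ k l : Fin n, k ≠ i → l ≠ i → l < k → lam k = lam l := by
    intro k l hk hl hlk
    have := (Finset.sum_eq_zero_iff_of_nonneg (fun l _ => hinner k l)).mp
      (houter k (Finset.mem_univ k)) l (Finset.mem_univ l)
    rw [if_pos ⟨hk, hl, hlk⟩] at this
    have := pow_eq_zero_iff (n := 2) (by norm_num) |>.mp this
    linarith
  intro k
  by_cases hk : k = i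
  · rw [hk]; exact hli
  by_cases hkj : k = j
  · rw [hkj]; exact hlj
  rcases lt_or_gt_of_ne (fun h : k = j => hkj h) with h | h
  · have := hterm j k (Ne.symm hij) hk h; rw [← this]; exact hlj
  · have := hterm k j hk (Ne.symm hij) h; rw [this, hlj]
end

section
/- Let (V, ⟨·,·⟩) be a finite-dimensional real inner product space of dimension n and let T : V → V be symmetric with eigenvalues λ₁ ≤ ⋯ ≤ λₙ. For 1 ≤ k ≤ n, λ₁ + ⋯ + λ_k equals the infimum, over all k-dimensional subspaces W ⊆ V, of the trace of T restricted to W (i.e., Σᵢ ⟨T eᵢ, eᵢ⟩ over an orthonormal basis {eᵢ} of W). In particular, T ↦ λ₁(T) + ⋯ + λ_k(T) is a concave function on symmetric operators. -/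
open scoped RealInnerProductSpace

/-- The infimum, over orthonormal `k`-families in `ℝⁿ`, of the trace of the symmetric
operator `T` restricted to the span of the family; this equals the sum of the `k`
smallest eigenvalues of `T`. -/
noncomputable def mSum (n k : ℕ)
    (T : EuclideanSpace ℝ (Fin n) →ₗ[ℝ] EuclideanSpace ℝ (Fin n)) : ℝ :=
  sInf {t : ℝ | ∃ e : Fin k → EuclideanSpace ℝ (Fin n), Orthonormal ℝ e ∧
    t = ∑ i, ⟪T (e i), e i⟫}

/-!
Expanding each `e i` of an orthonormal `k`-family in an eigenbasis `b` of `T` writes the trace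
`∑ i, ⟪T (e i), e i⟫` as `∑ j, λ j * c j`, where the weights `c j = ∑ i, ⟪e i, b j⟫ ^ 2` lie in
`[0, 1]` by Bessel's inequality and sum to `k` by Parseval. Among such weightings the one putting
full weight on the `k` smallest eigenvalues is minimal, and it is realised by the first `k`
eigenvectors. Being an infimum of functions linear in `T`, the sum of the `k` smallest
eigenvalues is concave.
-/

open Finset

/-- Compare both sides with the threshold `μ` separating `lam` on `s` from `lam` off `s`:
`∑ j, (lam j - μ) * (c j - 𝟙_s j)` is a sum of nonnegative terms. -/
theorem sum_le_sum_mul_of_threshold {ι : Type*} [Fintype ι] (s : Finset ι) {lam c : ι → ℝ}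
    {μ : ℝ} (hlow : ∀ j ∈ s, lam j ≤ μ) (hhigh : ∀ j ∉ s, μ ≤ lam j)
    (hc0 : ∀ j, 0 ≤ c j) (hc1 : ∀ j, c j ≤ 1) (hsum : ∑ j, c j = #s) :
    ∑ j ∈ s, lam j ≤ ∑ j, lam j * c j := by
  classical
  have hdiff : ∑ j, lam j * c j - ∑ j ∈ s, lam j =
      ∑ j, (lam j - μ) * (c j - if j ∈ s then 1 else 0) := by
    simp only [mul_sub, sub_mul, mul_ite, mul_one, mul_zero, sum_sub_distrib, ← mul_sum,
      sum_ite_mem, univ_inter, hsum, sum_const, nsmul_eq_mul]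
    ring
  have hnonneg : 0 ≤ ∑ j, (lam j - μ) * (c j - if j ∈ s then 1 else 0) := by
    refine sum_nonneg fun j _ => ?_
    by_cases hj : j ∈ s
    · rw [if_pos hj]
      exact mul_nonneg_of_nonpos_of_nonpos (by linarith [hlow j hj]) (by linarith [hc1 j])
    · rw [if_neg hj]
      exact mul_nonneg (by linarith [hhigh j hj]) (by linarith [hc0 j])
  linarith

section InnerProductSpace

variable {E : Type*} [NormedAddCommGroup E] [InnerProductSpace ℝ E]

theorem neg_opNorm_le_inner_map_self (T : E →L[ℝ] E) {x : E} (hx : ‖x‖ = 1) :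
    -‖T‖ ≤ ⟪T x, x⟫ := by
  have h₁ := abs_real_inner_le_norm (T x) x
  have h₂ := T.le_opNorm x
  rw [hx, mul_one] at h₁ h₂
  linarith [neg_abs_le ⟪T x, x⟫]

theorem Orthonormal.sum_sq_inner_le_one {κ : Type*} [Fintype κ] {e : κ → E}
    (he : Orthonormal ℝ e) {y : E} (hy : ‖y‖ = 1) : ∑ i, ⟪e i, y⟫ ^ 2 ≤ 1 := by
  simpa [hy] using he.sum_inner_products_le y (s := univ)

theorem Orthonormal.sum_sum_sq_inner_eq_card {ι κ : Type*} [Fintype ι] [Fintype κ]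
    {e : κ → E} (he : Orthonormal ℝ e) (b : OrthonormalBasis ι ℝ E) :
    ∑ j, ∑ i, ⟪e i, b j⟫ ^ 2 = Fintype.card κ := by
  rw [sum_comm]
  simp [b.sum_sq_inner_left, he.1]

variable {ι : Type*} [Fintype ι] {T : E →ₗ[ℝ] E} {b : OrthonormalBasis ι ℝ E} {lam : ι → ℝ}

theorem inner_map_self_eq_sum_of_eigenbasis (hT : T.IsSymmetric)
    (heig : ∀ j, T (b j) = lam j • b j) (x : E) :
    ⟪T x, x⟫ = ∑ j, lam j * ⟪x, b j⟫ ^ 2 := by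
  rw [← b.sum_inner_mul_inner (T x) x]
  refine sum_congr rfl fun j _ => ?_
  rw [hT, heig, real_inner_smul_right, real_inner_comm (b j)]
  ring

theorem sum_le_sum_inner_map_self_of_eigenbasis (hT : T.IsSymmetric)
    (heig : ∀ j, T (b j) = lam j • b j) (s : Finset ι) {μ : ℝ}
    (hlow : ∀ j ∈ s, lam j ≤ μ) (hhigh : ∀ j ∉ s, μ ≤ lam j)
    {κ : Type*} [Fintype κ] {e : κ → E} (he : Orthonormal ℝ e) (hcard : Fintype.card κ = #s) :
    ∑ j ∈ s, lam j ≤ ∑ i, ⟪T (e i), e i⟫ := by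
  have htrace : ∑ i, ⟪T (e i), e i⟫ = ∑ j, lam j * ∑ i, ⟪e i, b j⟫ ^ 2 := by
    simp_rw [inner_map_self_eq_sum_of_eigenbasis hT heig, mul_sum]
    exact sum_comm
  rw [htrace]
  exact sum_le_sum_mul_of_threshold s hlow hhigh (fun j => sum_nonneg fun i _ => sq_nonneg _)
    (fun j => he.sum_sq_inner_le_one (b.orthonormal.1 j))
    (by rw [he.sum_sum_sq_inner_eq_card, hcard])

end InnerProductSpace

section mSum

variable {n k : ℕ}

theorem mSum_le_sum_inner (T : EuclideanSpace ℝ (Fin n) →ₗ[ℝ] EuclideanSpace ℝ (Fin n))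
    {e : Fin k → EuclideanSpace ℝ (Fin n)} (he : Orthonormal ℝ e) :
    mSum n k T ≤ ∑ i, ⟪T (e i), e i⟫ := by
  refine csInf_le ⟨k • -‖LinearMap.toContinuousLinearMap T‖, ?_⟩ ⟨e, he, rfl⟩
  rintro _ ⟨e', he', rfl⟩
  simpa using card_nsmul_le_sum univ _ _ fun i _ =>
    neg_opNorm_le_inner_map_self (LinearMap.toContinuousLinearMap T) (he'.1 i)

theorem le_mSum (hkn : k ≤ n) {T : EuclideanSpace ℝ (Fin n) →ₗ[ℝ] EuclideanSpace ℝ (Fin n)}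
    {a : ℝ} (h : ∀ e : Fin k → EuclideanSpace ℝ (Fin n), Orthonormal ℝ e →
      a ≤ ∑ i, ⟪T (e i), e i⟫) :
    a ≤ mSum n k T :=
  le_csInf ⟨_, _, (EuclideanSpace.basisFun (Fin n) ℝ).orthonormal.comp _
    (Fin.castLE_injective hkn), rfl⟩ (by rintro _ ⟨e, he, rfl⟩; exact h e he)

theorem concaveOn_mSum (hkn : k ≤ n) : ConcaveOn ℝ Set.univ (mSum n k) := by
  refine ⟨convex_univ, fun S _ S' _ a a' ha ha' _ => le_mSum hkn fun e he => ?_⟩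
  calc a • mSum n k S + a' • mSum n k S'
      ≤ a * ∑ i, ⟪S (e i), e i⟫ + a' * ∑ i, ⟪S' (e i), e i⟫ := by
        simp only [smul_eq_mul]
        gcongr <;> exact mSum_le_sum_inner _ he
    _ = ∑ i, ⟪(a • S + a' • S') (e i), e i⟫ := by
        simp only [LinearMap.add_apply, LinearMap.smul_apply, inner_add_left,
          real_inner_smul_left, sum_add_distrib, mul_sum]

end mSum

theorem Fin.filter_val_lt_eq_map_castLEEmb {n k : ℕ} (hkn : k ≤ n) :
    ({j : Fin n | (j : ℕ) < k} : Finset (Fin n)) = univ.map (Fin.castLEEmb hkn) := by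
  ext j
  simp only [mem_filter, mem_univ, true_and, mem_map, Fin.coe_castLEEmb]
  rw [← Set.mem_range, Fin.range_castLE hkn, Set.mem_ofPred_eq]

theorem stmt14 (n k : ℕ) (hk : 1 ≤ k) (hkn : k ≤ n)
    (T : EuclideanSpace ℝ (Fin n) →ₗ[ℝ] EuclideanSpace ℝ (Fin n))
    (hT : T.IsSymmetric)
    (b : OrthonormalBasis (Fin n) ℝ (EuclideanSpace ℝ (Fin n)))
    (lam : Fin n → ℝ) (hmono : Monotone lam)
    (heig : ∀ i, T (b i) = lam i • b i) :
    (∑ i : Fin n, if (i : ℕ) < k then lam i else 0) = mSum n k T ∧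
    ∀ (S S' : EuclideanSpace ℝ (Fin n) →ₗ[ℝ] EuclideanSpace ℝ (Fin n)),
      S.IsSymmetric → S'.IsSymmetric → ∀ s : ℝ, s ∈ Set.Icc (0 : ℝ) 1 →
        s * mSum n k S + (1 - s) * mSum n k S' ≤ mSum n k (s • S + (1 - s) • S') := by
  refine ⟨?_, fun S S' _ _ s hs =>
    (concaveOn_mSum hkn).2 trivial trivial hs.1 (sub_nonneg.2 hs.2) (add_sub_cancel _ _)⟩
  rw [← sum_filter]
  refine le_antisymm (le_mSum hkn fun e he => ?_) ?_
  · let kth : Fin n := ⟨k - 1, by omega⟩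
    refine sum_le_sum_inner_map_self_of_eigenbasis hT heig _ (μ := lam kth)
      (fun j hj => hmono ?_) (fun j hj => hmono ?_) he ?_
    · simp only [mem_filter, mem_univ, true_and] at hj
      exact Fin.le_def.2 (by simp [kth]; omega)
    · simp only [mem_filter, mem_univ, true_and] at hj
      exact Fin.le_def.2 (by simp [kth]; omega)
    · simp [Fin.card_filter_val_lt, hkn]
  · calc mSum n k T ≤ ∑ i : Fin k, ⟪T (b (Fin.castLE hkn i)), b (Fin.castLE hkn i)⟫ :=
          mSum_le_sum_inner T (b.orthonormal.comp _ (Fin.castLE_injective hkn))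
      _ = _ := by
          rw [Fin.filter_val_lt_eq_map_castLEEmb hkn, sum_map]
          simp [heig, real_inner_smul_left, b.orthonormal.1]
end
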